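/- Let R be a commutative ring, m ∈ R, and let (U_e) be the generalized Fibonacci sequence with parameter m. Then for all n ≥ 1, l ≥ 1 and p ≥ 0: ∑_{j=1}^n U_{l-1}^{n-j}·U_l^{j-1}·U_{(n-1)p+j-1}·C(n-1, j-1) = U_{(n-1)(l+p)} (natural-number powers, with x^0 = 1). -/
import Mathlib


/-- The generalized Fibonacci sequence with parameter `m`:
`U_0 = 0`, `U_1 = 1`, `U_{e+1} = m U_e + U_{e-1}`. -/
def genFibU {R : Type*} [CommRing R] (m : R) : ℕ → R
  | 0 => 0
  | 1 => 1
  | e + 2 => m * genFibU m (e + 1) + genFibU m e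

lemma genFibU_add {R : Type*} [CommRing R] (m : R) :
    ∀ b a, genFibU m (a + b + 1) =
      genFibU m (a + 1) * genFibU m (b + 1) + genFibU m a * genFibU m b := by
  intro b
  induction b using Nat.strong_induction_on with
  | _ b ih =>
    match b with
    | 0 => intro a; simp [genFibU]
    | 1 =>
      intro a
      show genFibU m (a + 2) = _
      simp only [genFibU]
      ring
    | b + 2 =>
      intro a
      have h1 := ih (b + 1) (by omega) (a)
      have h0 := ih b (by omega) (a)
      have : a + (b + 2) + 1 = (a + b + 1) + 2 := by ring
      rw [this]
      show m * genFibU m (a + b + 1 + 1) + genFibU m (a + b + 1) = _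
      have e1 : a + b + 1 + 1 = a + (b + 1) + 1 := by ring
      rw [e1, h1, h0]
      have d1 : genFibU m (b + 1 + 1 + 1) = m * genFibU m (b + 2) + genFibU m (b + 1) := rfl
      have d2 : genFibU m (b + 1 + 1) = m * genFibU m (b + 1) + genFibU m b := rfl
      have e2 : b + 2 + 1 = b + 1 + 1 + 1 := rfl
      rw [e2, d1, d2]
      ring

lemma genFibU_expand {R : Type*} [CommRing R] (m : R) (l : ℕ) (hl : 1 ≤ l) :
    ∀ k s, ∑ j ∈ Finset.range (k + 1),
        genFibU m (l - 1) ^ (k - j) * genFibU m l ^ j *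
          genFibU m (s + j) * (Nat.choose k j : R) = genFibU m (k * l + s) := by
  have hadd : ∀ a, genFibU m (a + l) =
      genFibU m (a + 1) * genFibU m l + genFibU m a * genFibU m (l - 1) := by
    intro a
    have h1 : a + l = a + (l - 1) + 1 := by omega
    have h2 : l - 1 + 1 = l := by omega
    rw [h1, genFibU_add, h2]
  intro k
  induction k with
  | zero => intro s; simp
  | succ k ih =>
    intro s
    set g : ℕ → R := fun j => genFibU m (l - 1) ^ (k - j) * genFibU m l ^ j *
      genFibU m (s + j) * (Nat.choose k j : R) with hg
    rw [Finset.sum_range_succ']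
    have hsplit : ∀ j ∈ Finset.range (k + 1),
        genFibU m (l - 1) ^ (k + 1 - (j + 1)) * genFibU m l ^ (j + 1) *
          genFibU m (s + (j + 1)) * (Nat.choose (k + 1) (j + 1) : R) =
        genFibU m l * (genFibU m (l - 1) ^ (k - j) * genFibU m l ^ j *
          genFibU m ((s + 1) + j) * (Nat.choose k j : R)) +
        genFibU m (l - 1) * g (j + 1) := by
      intro j hj
      simp only [Finset.mem_range] at hj
      rw [Nat.choose_succ_succ]
      have hss : s + 1 + j = s + (j + 1) := by omega
      rw [hss, hg]
      push_cast
      by_cases hjk : j = k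
      · subst hjk
        simp [Nat.choose_succ_self]
        ring
      · have h1 : k + 1 - (j + 1) = k - j := by omega
        have h2 : k - j = (k - (j + 1)) + 1 := by omega
        rw [h2, pow_succ]
        ring
    rw [Finset.sum_congr rfl hsplit, Finset.sum_add_distrib, ← Finset.mul_sum,
      ← Finset.mul_sum, ih (s + 1)]
    have hf0 : genFibU m (l - 1) ^ (k + 1 - 0) * genFibU m l ^ 0 *
        genFibU m (s + 0) * (Nat.choose (k + 1) 0 : R) = genFibU m (l - 1) * g 0 := by
      simp [hg, pow_succ]
      ring
    rw [hf0, add_assoc, ← mul_add]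
    have hsum : (∑ j ∈ Finset.range (k + 1), g (j + 1)) + g 0
        = genFibU m (k * l + s) := by
      rw [← Finset.sum_range_succ' g (k + 1), Finset.sum_range_succ]
      have : g (k + 1) = 0 := by simp [hg, Nat.choose_succ_self]
      rw [this, add_zero]
      exact ih s
    rw [hsum]
    have harg : (k + 1) * l + s = (k * l + s) + l := by ring
    rw [harg, hadd]
    ring_nf

/-- `∑_{j=1}^n U_{l-1}^{n-j} U_l^{j-1} U_{(n-1)p+j-1} C(n-1, j-1) = U_{(n-1)(l+p)}`
(here the summation index `j₀ = j - 1` runs over `0, …, n-1`). -/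
theorem genFibU_binomial_identity {R : Type*} [CommRing R] (m : R)
    (n l p : ℕ) (hn : 1 ≤ n) (hl : 1 ≤ l) :
    ∑ j ∈ Finset.range n,
        genFibU m (l - 1) ^ (n - 1 - j) * genFibU m l ^ j *
          genFibU m ((n - 1) * p + j) * (Nat.choose (n - 1) j : R) =
      genFibU m ((n - 1) * (l + p)) := by
  obtain ⟨k, rfl⟩ : ∃ k, n = k + 1 := ⟨n - 1, by omega⟩
  have h := genFibU_expand m l hl k (k * p)
  simp only [Nat.add_sub_cancel]
  have harg : k * (l + p) = k * l + k * p := by ring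
  rw [harg]
  exact h
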